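/- For a T-periodic essentially bounded scalar function a and a locally square-integrable signal x, the phasors of the product satisfy F(ax)(t) = T(a) F(x)(t); i.e., the k-th phasor of a·x equals Σ_m a_{k−m} X_m(t), where (a_k) are the Fourier coefficients of a and X = F(x). -/

import Mathlib

open MeasureTheory

/-- The `k`-th Fourier coefficient of a `T`-periodic function. -/
noncomputable def fourierCoef (T : ℝ) (f : ℝ → ℂ) (k : ℤ) : ℂ :=
  (1 / (T : ℂ)) * ∫ τ in (0:ℝ)..T,
    f τ * Complex.exp (-(Complex.I * (k : ℂ) * ((2 * Real.pi / T : ℝ) : ℂ) * (τ : ℂ)))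

/-- Sliding Fourier (phasor) coefficient. -/
noncomputable def phasor (T : ℝ) (x : ℝ → ℂ) (k : ℤ) (t : ℝ) : ℂ :=
  (1 / (T : ℂ)) * ∫ τ in (t - T)..t,
    x τ * Complex.exp (-(Complex.I * (k : ℂ) * ((2 * Real.pi / T : ℝ) : ℂ) * (τ : ℂ)))

/-!
Lift everything to the circle `ℝ ⧸ Tℤ`: the phasor of `x` at time `t` is the Fourier coefficient
of the lift of `x` from the window `(t - T, t]`, and, `a` being periodic, `a_k` is the Fourier
coefficient of the lift of `a` from any window. On the circle, the `k`-th coefficient of a product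
`f g` of two `L²` functions is `⟪conj f · e_k, g⟫`, and Parseval's identity in polarized form
expands this inner product as the discrete convolution `∑ₘ f̂(k - m) ĝ(m)`.
-/

open AddCircle ComplexConjugate

lemma fourier_neg_coe_eq_exp {T : ℝ} (k : ℤ) (τ : ℝ) :
    fourier (-k) (τ : AddCircle T)
      = Complex.exp (-(Complex.I * k * ((2 * Real.pi / T : ℝ) : ℂ) * τ)) := by
  rw [fourier_coe_apply]
  congr 1
  push_cast
  ring

section

variable {T : ℝ} [Fact (0 < T)]

lemma fourierCoeff_conj_mul_fourier (f : AddCircle T → ℂ) (k m : ℤ) :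
    fourierCoeff (fun z => conj (f z) * fourier k z) m = conj (fourierCoeff f (k - m)) := by
  simp only [fourierCoeff, ← integral_conj, smul_eq_mul, map_mul]
  congr 1
  ext z
  rw [← fourier_neg, neg_neg, sub_eq_neg_add, fourier_add]
  ring

lemma memLp_conj_mul_fourier {f : AddCircle T → ℂ} (hf : MemLp f 2 haarAddCircle) (k : ℤ) :
    MemLp (fun z => conj (f z) * fourier k z) 2 haarAddCircle :=
  hf.of_le_mul (c := 1) (hf.1.star.mul (fourier k).continuous.aestronglyMeasurable) <|
    .of_forall fun z => by
      rw [norm_mul, RCLike.norm_conj, fourier_apply, Circle.norm_coe, one_mul, mul_one]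

lemma hasSum_conj_fourierCoeff_mul_fourierCoeff {f g : AddCircle T → ℂ}
    (hf : MemLp f 2 haarAddCircle) (hg : MemLp g 2 haarAddCircle) :
    HasSum (fun m => conj (fourierCoeff f m) * fourierCoeff g m)
      (∫ z, conj (f z) * g z ∂haarAddCircle) := by
  have hcoeff (m : ℤ) :
      inner ℂ (hf.toLp f) (fourierBasis m) * inner ℂ (fourierBasis m) (hg.toLp g)
        = conj (fourierCoeff f m) * fourierCoeff g m := by
    rw [← inner_conj_symm (hf.toLp f), ← HilbertBasis.repr_apply_apply,
      ← HilbertBasis.repr_apply_apply, fourierBasis_repr, fourierBasis_repr,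
      fourierCoeff_congr_ae hf.coeFn_toLp, fourierCoeff_congr_ae hg.coeFn_toLp]
  have hinner : inner ℂ (hf.toLp f) (hg.toLp g) = ∫ z, conj (f z) * g z ∂haarAddCircle := by
    rw [L2.inner_def]
    refine integral_congr_ae ?_
    filter_upwards [hf.coeFn_toLp, hg.coeFn_toLp] with z hfz hgz
    rw [RCLike.inner_apply, hfz, hgz, mul_comm]
  simpa only [hcoeff, hinner] using fourierBasis.hasSum_inner_mul_inner (hf.toLp f) (hg.toLp g)

theorem hasSum_fourierCoeff_mul {f g : AddCircle T → ℂ} (hf : MemLp f 2 haarAddCircle)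
    (hg : MemLp g 2 haarAddCircle) (k : ℤ) :
    HasSum (fun m => fourierCoeff f (k - m) * fourierCoeff g m)
      (fourierCoeff (fun z => f z * g z) k) := by
  have h := hasSum_conj_fourierCoeff_mul_fourierCoeff (memLp_conj_mul_fourier hf k) hg
  simp only [fourierCoeff_conj_mul_fourier, Complex.conj_conj, map_mul] at h
  convert h using 1
  simp only [fourierCoeff, smul_eq_mul, ← fourier_neg]
  congr 1
  ext z
  ring

lemma phasor_add_eq_fourierCoeff_liftIoc (f : ℝ → ℂ) (k : ℤ) (c : ℝ) :
    phasor T f k (c + T) = fourierCoeff (liftIoc T c f) k := by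
  rw [phasor, add_sub_cancel_right, fourierCoeff_eq_intervalIntegral _ _ c, one_div, one_div,
    Complex.real_smul, Complex.ofReal_inv]
  congr 1
  refine intervalIntegral.integral_congr_ae (.of_forall fun τ hτ => ?_)
  rw [Set.uIoc_of_le (le_add_of_nonneg_right (Fact.out : 0 < T).le)] at hτ
  rw [liftIoc_coe_apply hτ, fourier_neg_coe_eq_exp, smul_eq_mul, mul_comm]

lemma Function.Periodic.liftIoc_eq {β : Type*} {f : ℝ → β} (hf : Function.Periodic f T)
    (c : ℝ) : liftIoc T c f = hf.lift := by
  ext z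
  conv_rhs => rw [← coe_equivIoc (a := c) (y := z)]
  rfl

lemma fourierCoef_eq_fourierCoeff_liftIoc {f : ℝ → ℂ} (hf : Function.Periodic f T) (k : ℤ)
    (c : ℝ) : fourierCoef T f k = fourierCoeff (liftIoc T c f) k := by
  rw [hf.liftIoc_eq, ← hf.liftIoc_eq 0, ← phasor_add_eq_fourierCoeff_liftIoc, zero_add, phasor,
    sub_self, fourierCoef]

end

/-- `F(ax) = T(a) F(x)`: the `k`-th phasor of the product `a·x` equals
`Σ_m a_{k−m} X_m(t)`. -/
theorem phasor_mul_eq_laurent_apply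
    (T : ℝ) (hT : 0 < T) (a : ℝ → ℂ) (x : ℝ → ℂ)
    (ha_per : ∀ t, a (t + T) = a t)
    (ha_meas : Measurable a)
    (ha_bdd : ∃ C, ∀ t, ‖a t‖ ≤ C)
    (hx : ∀ A B : ℝ, MemLp x 2 (volume.restrict (Set.Ioc A B))) :
    ∀ (k : ℤ) (t : ℝ),
      phasor T (fun τ => a τ * x τ) k t
        = ∑' m : ℤ, fourierCoef T a (k - m) * phasor T x m t := by
  intro k t
  have : Fact (0 < T) := ⟨hT⟩
  obtain ⟨c, rfl⟩ : ∃ c, t = c + T := ⟨t - T, (sub_add_cancel t T).symm⟩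
  obtain ⟨C, hC⟩ := ha_bdd
  have ha : MemLp a 2 (volume.restrict (Set.Ioc c (c + T))) :=
    .of_bound ha_meas.aestronglyMeasurable C (.of_forall hC)
  have hprod := hasSum_fourierCoeff_mul ha.memLp_liftIoc.haarAddCircle
    (hx c (c + T)).memLp_liftIoc.haarAddCircle k
  simp only [phasor_add_eq_fourierCoeff_liftIoc, fourierCoef_eq_fourierCoeff_liftIoc ha_per _ c]
  exact hprod.tsum_eq.symm
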